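/- arXiv:2401.07840 — 3 statements merged into one kernel-verified Lean document; each statement's English description precedes it below -/
import Mathlib

section
/- For every natural number n, the sum over all pairs (i,j) of natural numbers with i+j=n of (2i choose i)·(2j choose j) equals 4^n. -/
/-!
Write `S n = ∑_{i+j=n} C(2i,i) C(2j,j)` and `T n = ∑_{i+j=n} i C(2i,i) C(2j,j)`. The symmetry
`i ↔ j` gives `2 T n = n S n`, while `(i+1) C(2i+2,i+1) = 2(2i+1) C(2i,i)` gives
`T (n+1) = 2 (2 T n + S n)`. Together `(n+1) S (n+1) = 4 (n+1) S n`, so `S n = 4 ^ n`.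
-/

open Finset Nat

theorem two_mul_sum_antidiagonal_fst_mul {R : Type*} [CommSemiring R] (f : ℕ → R) (n : ℕ) :
    2 * ∑ p ∈ antidiagonal n, (p.1 : R) * (f p.1 * f p.2) =
      n * ∑ p ∈ antidiagonal n, f p.1 * f p.2 := by
  have swap : ∑ p ∈ antidiagonal n, (p.1 : R) * (f p.1 * f p.2) =
      ∑ p ∈ antidiagonal n, (p.2 : R) * (f p.1 * f p.2) := by
    rw [← Finset.Nat.sum_antidiagonal_swap]
    exact sum_congr rfl fun p _ => by rw [Prod.fst_swap, Prod.snd_swap, mul_comm (f p.2)]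
  rw [two_mul]
  nth_rw 2 [swap]
  rw [← sum_add_distrib, mul_sum]
  refine sum_congr rfl fun p hp => ?_
  rw [← add_mul, ← Nat.cast_add, mem_antidiagonal.mp hp]

theorem sum_antidiagonal_succ_fst_mul_centralBinom (n : ℕ) :
    ∑ p ∈ antidiagonal (n + 1), p.1 * (centralBinom p.1 * centralBinom p.2) =
      2 * ∑ p ∈ antidiagonal n, (2 * p.1 + 1) * (centralBinom p.1 * centralBinom p.2) := by
  rw [Finset.Nat.sum_antidiagonal_succ, zero_mul, zero_add, mul_sum]
  refine sum_congr rfl fun p _ => ?_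
  rw [← mul_assoc, succ_mul_centralBinom_succ, mul_assoc, mul_assoc]

theorem sum_antidiagonal_succ_centralBinom_mul_centralBinom (n : ℕ) :
    ∑ p ∈ antidiagonal (n + 1), centralBinom p.1 * centralBinom p.2 =
      4 * ∑ p ∈ antidiagonal n, centralBinom p.1 * centralBinom p.2 := by
  set S := fun m => ∑ p ∈ antidiagonal m, centralBinom p.1 * centralBinom p.2
  set T := fun m => ∑ p ∈ antidiagonal m, p.1 * (centralBinom p.1 * centralBinom p.2)
  have symm (m : ℕ) : 2 * T m = m * S m := by
    simpa using two_mul_sum_antidiagonal_fst_mul centralBinom m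
  have shift : T (n + 1) = 2 * (2 * T n + S n) := by
    simp only [T, S, sum_antidiagonal_succ_fst_mul_centralBinom, mul_sum, ← sum_add_distrib,
      add_mul, one_mul, mul_assoc]
  refine Nat.eq_of_mul_eq_mul_left n.succ_pos ?_
  calc (n + 1) * S (n + 1) = 2 * T (n + 1) := by rw [symm]
    _ = 4 * (2 * T n + S n) := by rw [shift]; ring
    _ = (n + 1) * (4 * S n) := by rw [symm]; ring

theorem sum_central_binom (n : ℕ) :
    ∑ p ∈ Finset.HasAntidiagonal.antidiagonal n,
      ((2 * p.1).choose p.1) * ((2 * p.2).choose p.2) = 4 ^ n := by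
  change ∑ p ∈ antidiagonal n, centralBinom p.1 * centralBinom p.2 = 4 ^ n
  induction n with
  | zero => simp
  | succ n ih => rw [sum_antidiagonal_succ_centralBinom_mul_centralBinom, ih, pow_succ, mul_comm]
end

section
/- As formal power series over the rationals, the square of the generating function ∑_{n≥0} (2n choose n) x^n equals 1/(1-4x). -/
/-!
The recurrence `(n + 1) c (n + 1) = 2 (2n + 1) c n` for the central binomial coefficients says
that `C = ∑ c n X^n` solves `(1 - 4X) C' = 2C`. Hence `(1 - 4X) C²` has derivative
`-4C² + 2C (1 - 4X) C' = 0` and constant term `1`, so it equals `1`.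
-/

open PowerSeries

namespace PowerSeries

variable (R : Type*) [CommRing R]

def centralBinomSeries : R⟦X⟧ := mk fun n => (n.centralBinom : R)

variable {R}

@[simp]
theorem coeff_centralBinomSeries (n : ℕ) : coeff n (centralBinomSeries R) = n.centralBinom :=
  coeff_mk _ _

@[simp]
theorem constantCoeff_centralBinomSeries : constantCoeff (centralBinomSeries R) = 1 := by
  simp [centralBinomSeries]

theorem one_sub_four_X_mul_derivative_centralBinomSeries :
    (1 - 4 * X) * d⁄dX R (centralBinomSeries R) = 2 * centralBinomSeries R := by
  ext n
  have h := congrArg (Nat.cast : ℕ → R) (Nat.succ_mul_centralBinom_succ n)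
  rw [← map_ofNat C 4, ← map_ofNat C 2, sub_mul, one_mul, mul_assoc, map_sub, coeff_C_mul,
    coeff_C_mul]
  cases n <;>
    simp only [coeff_zero_X_mul, coeff_succ_X_mul, coeff_derivative, coeff_centralBinomSeries] <;>
    push_cast at h ⊢ <;>
    linear_combination h

theorem one_sub_four_X_mul_centralBinomSeries_sq [IsAddTorsionFree R] :
    (1 - 4 * X) * centralBinomSeries R ^ 2 = 1 := by
  apply derivative.ext
  · rw [derivative_one, Derivation.leibniz, derivative_pow, ← map_ofNat C 4, map_sub,
      derivative_one, Derivation.leibniz, derivative_C, derivative_X]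
    simp only [smul_eq_mul, map_ofNat]
    linear_combination (2 * centralBinomSeries R) *
      (one_sub_four_X_mul_derivative_centralBinomSeries (R := R))
  · simp

end PowerSeries

theorem central_binom_gf_sq :
    (PowerSeries.mk fun n => ((2 * n).choose n : ℚ)) ^ 2
      = (1 - 4 * PowerSeries.X : PowerSeries ℚ)⁻¹ := by
  rw [eq_inv_iff_mul_eq_one (by simp), mul_comm]
  exact one_sub_four_X_mul_centralBinomSeries_sq
end

section
/- The generating function of the central Delannoy numbers D_n = ∑_{d=0}^n (n+d choose n-d)(2d choose d) satisfies (∑_{n≥0} D_n x^n)² · (1 - 6x + x²) = 1 as formal power series over ℚ. -/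
/-!
With `C(t) = ∑ binom(2d, d) tᵈ` we have `C(t)² (1 - 4t) = 1`. Substituting `t = x / (1 - x)²` and
using `(1 - x)² - 4x = 1 - 6x + x²` shows that `C(t) / (1 - x)` squares to `1 / (1 - 6x + x²)`.
Its `n`-th coefficient is `∑_d binom(2d, d) [xⁿ] xᵈ / (1 - x)^(2d+1)`, that is
`∑_d binom(2d, d) binom(n + d, 2d) = D_n`.
-/

open PowerSeries Finset

namespace PowerSeries

variable {R : Type*} [CommRing R]

theorem one_sub_four_X_mul_derivative_mk_centralBinom :
    (1 - 4 * X) * d⁄dX R (mk fun n ↦ (n.centralBinom : R)) =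
      2 * mk fun n ↦ (n.centralBinom : R) := by
  have hrec (n : ℕ) :
      ((n + 1) * (n + 1).centralBinom : R) = 2 * (2 * n + 1) * n.centralBinom := by
    exact_mod_cast congrArg (Nat.cast (R := R)) (Nat.succ_mul_centralBinom_succ n)
  rw [← map_ofNat C 4, ← map_ofNat C 2]
  ext n
  rcases n with _ | n
  · simp only [sub_mul, one_mul, mul_assoc, map_sub, coeff_C_mul, coeff_zero_X_mul,
      coeff_derivative, coeff_mk]
    linear_combination hrec 0
  · have h := hrec (n + 1)
    simp only [sub_mul, one_mul, mul_assoc, map_sub, coeff_C_mul, coeff_succ_X_mul,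
      coeff_derivative, coeff_mk]
    push_cast at h ⊢
    linear_combination h

theorem mk_centralBinom_sq_mul_one_sub_four_X [IsAddTorsionFree R] :
    (mk fun n ↦ (n.centralBinom : R)) ^ 2 * (1 - 4 * X) = 1 := by
  have h4 : d⁄dX R (4 : R⟦X⟧) = 0 := by rw [← map_ofNat C 4, derivative_C]
  refine derivative.ext ?_ (by simp)
  rw [Derivation.leibniz, Derivation.leibniz_pow, map_sub, Derivation.leibniz, h4,
    derivative_X, Derivation.map_one_eq_zero]
  simp only [smul_eq_mul, nsmul_eq_mul]
  linear_combination (2 * mk fun n ↦ (n.centralBinom : R)) *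
    one_sub_four_X_mul_derivative_mk_centralBinom (R := R)

theorem coeff_subst_eq_sum_range {a : R⟦X⟧} (ha : constantCoeff a = 0) (f : R⟦X⟧) {m n : ℕ}
    (hmn : m ≤ n) :
    coeff m (f.subst a) = ∑ d ∈ range (n + 1), coeff d f • coeff m (a ^ d) := by
  rw [coeff_subst' (HasSubst.of_constantCoeff_zero' ha)]
  refine finsum_eq_sum_of_support_subset _ (Function.support_subset_iff'.mpr fun d hd ↦ ?_)
  have hmd : (m : ℕ∞) < d := Nat.cast_lt.mpr (by grind)
  rw [coeff_of_lt_order _ (hmd.trans_le (le_order_pow_of_constantCoeff_eq_zero d ha)), smul_zero]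

theorem coeff_mul_subst {a : R⟦X⟧} (ha : constantCoeff a = 0) (f g : R⟦X⟧) (n : ℕ) :
    coeff n (g * f.subst a) = ∑ d ∈ range (n + 1), coeff d f • coeff n (g * a ^ d) := by
  simp only [coeff_mul, Finset.smul_sum]
  rw [Finset.sum_comm]
  refine Finset.sum_congr rfl fun p hp ↦ ?_
  rw [coeff_subst_eq_sum_range ha f (n := n) (Finset.HasAntidiagonal.antidiagonal.snd_le hp),
    Finset.mul_sum]
  exact Finset.sum_congr rfl fun d _ ↦ by simp only [smul_eq_mul]; ring

theorem coeff_X_pow_mul_mk_one_pow (d n : ℕ) :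
    coeff n (X ^ d * (mk 1 : R⟦X⟧) ^ (2 * d + 1)) = ((n + d).choose (2 * d) : R) := by
  rw [mk_one_pow_eq_mk_choose_add, coeff_X_pow_mul', coeff_mk]
  split_ifs with hdn
  · rw [show 2 * d + (n - d) = n + d by omega]
  · rw [Nat.choose_eq_zero_of_lt (by omega), Nat.cast_zero]

theorem mk_centralDelannoy_eq_mul_subst :
    (mk fun n ↦ ∑ d ∈ range (n + 1), ((n + d).choose (n - d) : R) * ((2 * d).choose d : R)) =
      mk 1 * (mk fun n ↦ (n.centralBinom : R)).subst (X * mk 1 ^ 2 : R⟦X⟧) := by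
  ext n
  rw [coeff_mul_subst (by simp), coeff_mk]
  refine Finset.sum_congr rfl fun d hd ↦ ?_
  have hdn : d ≤ n := Nat.lt_succ_iff.mp (mem_range.mp hd)
  have hpow : (mk 1 : R⟦X⟧) * (X * mk 1 ^ 2) ^ d = X ^ d * mk 1 ^ (2 * d + 1) := by ring
  rw [coeff_mk, smul_eq_mul, hpow, coeff_X_pow_mul_mk_one_pow,
    Nat.choose_symm_of_eq_add (show n + d = n - d + 2 * d by omega),
    Nat.centralBinom_eq_two_mul_choose, mul_comm]

end PowerSeries

theorem delannoy_gf_sq :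
    (PowerSeries.mk fun n =>
        ∑ d ∈ Finset.range (n + 1), ((n + d).choose (n - d) : ℚ) * ((2 * d).choose d : ℚ)) ^ 2 *
      (1 - 6 * PowerSeries.X + PowerSeries.X ^ 2) = 1 := by
  rw [mk_centralDelannoy_eq_mul_subst]
  set u : ℚ⟦X⟧ := mk 1
  set a : ℚ⟦X⟧ := X * u ^ 2
  set S : ℚ⟦X⟧ := (mk fun n ↦ (n.centralBinom : ℚ)).subst a
  have ha : HasSubst a := HasSubst.of_constantCoeff_zero' (by simp [a, u])
  have hS : S ^ 2 * (1 - 4 * a) = 1 := by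
    have h := congrArg (substAlgHom (R := ℚ) ha) mk_centralBinom_sq_mul_one_sub_four_X
    rwa [map_mul, map_pow, map_sub, map_one, map_mul, map_ofNat, substAlgHom_X,
      coe_substAlgHom] at h
  have hu : u * (1 - X) = 1 := mk_one_mul_one_sub_eq_one ℚ
  linear_combination hS + (S ^ 2 * (u * (1 - X) + 1)) * hu
end
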